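/- arXiv:1201.5513 — 2 statements merged into one kernel-verified Lean document; each statement's English description precedes it below -/
import Mathlib

section
/- Let A, B, C be three subsets of a finite set such that each pair overlaps and each of (A ∩ B) \ C, (B ∩ C) \ A, (A ∩ C) \ B is nonempty. Then the family {A, B, C} does not verify the C1P. -/
variable {C : Type*} [Fintype C] [DecidableEq C]

/-- A family `R` of subsets of the finite set `C` verifies the Consecutive Ones Property:
there is a bijection `σ : C ≃ Fin |C|` under which every member of `R` is an interval. -/
def IsC1P (R : Finset (Finset C)) : Prop :=
  ∃ σ : C ≃ Fin (Fintype.card C),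
    ∀ r ∈ R, ∃ a b : ℕ, ∀ x : C, x ∈ r ↔ a ≤ (σ x : ℕ) ∧ (σ x : ℕ) ≤ b

/-- A Minimal Conflicting Set: nonempty, not C1P, but every proper subfamily is C1P. -/
def IsMCS (S : Finset (Finset C)) : Prop :=
  S.Nonempty ∧ ¬ IsC1P S ∧ ∀ T ⊂ S, IsC1P T

/-- Two sets overlap. -/
def Overlap (X Y : Finset C) : Prop :=
  (X ∩ Y).Nonempty ∧ (X \ Y).Nonempty ∧ (Y \ X).Nonempty

/-! Fix an order under which `A`, `B`, `c` are intervals and points `p ∈ A ∩ B \ c`,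
`q ∈ B ∩ c \ A`, `r ∈ A ∩ c \ B`. The middle one of `p`, `q`, `r` lies between the other two,
which share an interval that the middle one misses. -/

theorem mem_uIcc_or_mem_uIcc_or_mem_uIcc {α : Type*} [LinearOrder α] (p q r : α) :
    p ∈ Set.uIcc q r ∨ q ∈ Set.uIcc p r ∨ r ∈ Set.uIcc p q := by
  simp only [Set.mem_uIcc]
  rcases le_total p q with hpq | hqp <;> rcases le_total q r with hqr | hrq <;>
    rcases le_total p r with hpr | hrp <;> tauto

theorem Set.OrdConnected.inter_diff_eq_empty {α : Type*} [LinearOrder α] {I J K : Set α}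
    (hI : I.OrdConnected) (hJ : J.OrdConnected) (hK : K.OrdConnected)
    (hIJ : ((I ∩ J) \ K).Nonempty) (hJK : ((J ∩ K) \ I).Nonempty) : (I ∩ K) \ J = ∅ := by
  obtain ⟨p, ⟨hpI, hpJ⟩, hpK⟩ := hIJ
  obtain ⟨q, ⟨hqJ, hqK⟩, hqI⟩ := hJK
  refine Set.eq_empty_of_forall_notMem fun r ⟨⟨hrI, hrK⟩, hrJ⟩ => ?_
  rcases mem_uIcc_or_mem_uIcc_or_mem_uIcc p q r with hp | hq | hr
  · exact hpK (hK.uIcc_subset hqK hrK hp)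
  · exact hqI (hI.uIcc_subset hpI hrI hq)
  · exact hrJ (hJ.uIcc_subset hpJ hqJ hr)

theorem IsC1P.exists_ordConnected_preimage {α : Type*} [Fintype α] {R : Finset (Finset α)}
    (h : IsC1P R) :
    ∃ f : α → ℕ, ∀ r ∈ R, ∃ I : Set ℕ, I.OrdConnected ∧ (r : Set α) = f ⁻¹' I := by
  obtain ⟨σ, hσ⟩ := h
  refine ⟨fun x => σ x, fun r hr => ?_⟩
  obtain ⟨a, b, hab⟩ := hσ r hr
  exact ⟨Set.Icc a b, Set.ordConnected_Icc, Set.ext hab⟩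

theorem formV_size3_not_c1p_general (A B c : Finset C)
    (h1 : ((A ∩ B) \ c).Nonempty) (h2 : ((B ∩ c) \ A).Nonempty)
    (h3 : ((A ∩ c) \ B).Nonempty) :
    ¬ IsC1P {A, B, c} := by
  intro h
  obtain ⟨f, hf⟩ := h.exists_ordConnected_preimage
  obtain ⟨I, hI, hA⟩ := hf A (by simp)
  obtain ⟨J, hJ, hB⟩ := hf B (by simp)
  obtain ⟨K, hK, hC⟩ := hf c (by simp)
  have transfer {X Y Z : Finset C} {U V W : Set ℕ} (hX : (X : Set C) = f ⁻¹' U)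
      (hY : (Y : Set C) = f ⁻¹' V) (hZ : (Z : Set C) = f ⁻¹' W)
      (h : ((X ∩ Y) \ Z).Nonempty) : ((U ∩ V) \ W).Nonempty := by
    rw [← Finset.coe_nonempty, Finset.coe_sdiff, Finset.coe_inter, hX, hY, hZ,
      ← Set.preimage_inter, ← Set.preimage_sdiff] at h
    exact Set.nonempty_of_nonempty_preimage h
  have hIK := hI.inter_diff_eq_empty hJ hK (transfer hA hB hC h1) (transfer hB hC hA h2)
  exact (transfer hA hC hB h3).ne_empty hIK

theorem formV_size3_not_c1p (A B c : Finset C)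
    (hAB : Overlap A B) (hBC : Overlap B c) (hAC : Overlap A c)
    (h1 : ((A ∩ B) \ c).Nonempty) (h2 : ((B ∩ c) \ A).Nonempty)
    (h3 : ((A ∩ c) \ B).Nonempty) :
    ¬ IsC1P {A, B, c} :=
  formV_size3_not_c1p_general A B c h1 h2 h3
end

section
/- Let A, B, C be three subsets of a finite set such that each pair overlaps, each of A \ (B ∪ C), B \ (A ∪ C), C \ (A ∪ B) is nonempty. Then {A, B, C} is a Minimal Conflicting Set. -/
variable {C : Type*} [Fintype C] [DecidableEq C]

/-!
Two sets `X`, `Y` become intervals at once when the ground set is listed as `X \ Y`, `X ∩ Y`,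
`Y \ X` and then the rest, so every proper subfamily of `{A, B, c}` is C1P. The whole family is
not: among three pairwise intersecting intervals, the one with the smallest left end and the one
with the largest right end cover the third, which therefore has no private point.
-/

open Set

lemma IsC1P.mono {ι : Type*} [Fintype ι] {T R : Finset (Finset ι)} (h : T ⊆ R) (hR : IsC1P R) :
    IsC1P T :=
  let ⟨σ, hσ⟩ := hR
  ⟨σ, fun r hr => hσ r (h hr)⟩

lemma Finset.exists_Icc_iff_of_ordConnected {n : ℕ} (s : Finset (Fin n))
    (hs : (s : Set (Fin n)).OrdConnected) :
    ∃ a b : ℕ, ∀ i : Fin n, i ∈ s ↔ a ≤ (i : ℕ) ∧ (i : ℕ) ≤ b := by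
  rcases s.eq_empty_or_nonempty with rfl | hne
  · exact ⟨1, 0, fun i => by simp only [Finset.notMem_empty, false_iff]; omega⟩
  refine ⟨s.min' hne, s.max' hne, fun i => ⟨fun hi => ⟨s.min'_le i hi, s.le_max' i hi⟩, ?_⟩⟩
  rintro ⟨hmin, hmax⟩
  exact hs.out (s.min'_mem hne) (s.max'_mem hne) ⟨Fin.le_iff_val_le_val.2 hmin, hmax⟩

lemma exists_equiv_fin_monotone {ι α : Type*} [Fintype ι] [LinearOrder α] (k : ι → α) :
    ∃ σ : ι ≃ Fin (Fintype.card ι), Monotone (k ∘ σ.symm) := by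
  let e := Fintype.equivFin ι
  exact ⟨e.trans (Tuple.sort (k ∘ e.symm)).symm, Tuple.monotone_sort (k ∘ e.symm)⟩

lemma isC1P_of_forall_eq_preimage {ι α : Type*} [Fintype ι] [LinearOrder α]
    (R : Finset (Finset ι)) (k : ι → α)
    (hR : ∀ r ∈ R, ∃ I : Set α, I.OrdConnected ∧ (r : Set ι) = k ⁻¹' I) : IsC1P R := by
  obtain ⟨σ, hσ⟩ := exists_equiv_fin_monotone k
  refine ⟨σ, fun r hr => ?_⟩
  obtain ⟨I, hI, hrI⟩ := hR r hr
  obtain ⟨a, b, hab⟩ := (r.map σ.toEmbedding).exists_Icc_iff_of_ordConnected (by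
    convert hI.preimage_mono hσ using 1
    ext i
    simp [hrI])
  exact ⟨a, b, fun x => by simpa using hab (σ x)⟩

lemma isC1P_pair (X Y : Finset C) : IsC1P ({X, Y} : Finset (Finset C)) := by
  let k : C → ℕ := fun x => if x ∈ X then (if x ∈ Y then 1 else 0) else (if x ∈ Y then 2 else 3)
  refine isC1P_of_forall_eq_preimage _ k fun r hr => ?_
  rcases Finset.mem_insert.1 hr with rfl | hr
  · refine ⟨Icc 0 1, ordConnected_Icc, ?_⟩
    ext x; by_cases x ∈ r <;> by_cases x ∈ Y <;> simp [k, *]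
  · rw [Finset.mem_singleton.1 hr]
    refine ⟨Icc 1 2, ordConnected_Icc, ?_⟩
    ext x; by_cases x ∈ X <;> by_cases x ∈ Y <;> simp [k, *]

lemma isC1P_of_ssubset_triple {X Y Z : Finset C} {T : Finset (Finset C)}
    (hT : T ⊂ {X, Y, Z}) : IsC1P T := by
  obtain ⟨W, hW, hWT⟩ := Finset.exists_of_ssubset hT
  simp only [Finset.mem_insert, Finset.mem_singleton] at hW
  rcases hW with rfl | rfl | rfl
  · exact (isC1P_pair Y Z).mono fun U hU => by grind
  · exact (isC1P_pair X Z).mono fun U hU => by grind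
  · exact (isC1P_pair X Y).mono fun U hU => by grind

lemma Nat.not_private_points_of_pairwise_inter_Icc (a₁ b₁ a₂ b₂ a₃ b₃ : ℕ)
    (h₁₂ : (Icc a₁ b₁ ∩ Icc a₂ b₂).Nonempty) (h₂₃ : (Icc a₂ b₂ ∩ Icc a₃ b₃).Nonempty)
    (h₁₃ : (Icc a₁ b₁ ∩ Icc a₃ b₃).Nonempty) (h₁ : (Icc a₁ b₁ \ (Icc a₂ b₂ ∪ Icc a₃ b₃)).Nonempty)
    (h₂ : (Icc a₂ b₂ \ (Icc a₁ b₁ ∪ Icc a₃ b₃)).Nonempty)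
    (h₃ : (Icc a₃ b₃ \ (Icc a₁ b₁ ∪ Icc a₂ b₂)).Nonempty) : False := by
  obtain ⟨x₁₂, hx₁₂⟩ := h₁₂
  obtain ⟨x₂₃, hx₂₃⟩ := h₂₃
  obtain ⟨x₁₃, hx₁₃⟩ := h₁₃
  obtain ⟨p₁, hp₁⟩ := h₁
  obtain ⟨p₂, hp₂⟩ := h₂
  obtain ⟨p₃, hp₃⟩ := h₃
  simp only [mem_inter_iff, mem_sdiff, mem_union, mem_Icc] at *
  omega

lemma not_isC1P_of_pairwise_inter_of_private_points {X Y Z : Finset C}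
    (hXY : (X ∩ Y).Nonempty) (hYZ : (Y ∩ Z).Nonempty) (hXZ : (X ∩ Z).Nonempty)
    (hX : (X \ (Y ∪ Z)).Nonempty) (hY : (Y \ (X ∪ Z)).Nonempty) (hZ : (Z \ (X ∪ Y)).Nonempty) :
    ¬ IsC1P ({X, Y, Z} : Finset (Finset C)) := by
  rintro ⟨σ, hσ⟩
  obtain ⟨a₁, b₁, h₁⟩ := hσ X (by simp)
  obtain ⟨a₂, b₂, h₂⟩ := hσ Y (by simp)
  obtain ⟨a₃, b₃, h₃⟩ := hσ Z (by simp)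
  have transfer {s : Finset C} {S : Set ℕ} (hS : ∀ x ∈ s, (σ x : ℕ) ∈ S) :
      s.Nonempty → S.Nonempty :=
    fun ⟨x, hx⟩ => ⟨σ x, hS x hx⟩
  refine Nat.not_private_points_of_pairwise_inter_Icc a₁ b₁ a₂ b₂ a₃ b₃
    (transfer ?_ hXY) (transfer ?_ hYZ) (transfer ?_ hXZ)
    (transfer ?_ hX) (transfer ?_ hY) (transfer ?_ hZ)
  all_goals intro x hx; simpa [h₁, h₂, h₃] using hx

theorem formIV_size3_mcs (A B c : Finset C)
    (hAB : Overlap A B) (hBC : Overlap B c) (hAC : Overlap A c)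
    (hA : (A \ (B ∪ c)).Nonempty) (hB : (B \ (A ∪ c)).Nonempty)
    (hC : (c \ (A ∪ B)).Nonempty) :
    IsMCS ({A, B, c} : Finset (Finset C)) :=
  ⟨⟨A, by simp⟩, not_isC1P_of_pairwise_inter_of_private_points hAB.1 hBC.1 hAC.1 hA hB hC,
    fun _ hT => isC1P_of_ssubset_triple hT⟩
end
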